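/- Let P be a probability measure on ℝ, τ ∈ (0,1), and Φ(q) = ∫_ℝ (ρ_τ(x - q) - ρ_τ(x)) dP(x). Then the right derivative of Φ at any point q̄ equals P((-∞, q̄]) - τ. -/

import Mathlib

/-!
Write `ρ_τ x = τ x + max (-x) 0`, so `ρ_τ` is Lipschitz and the difference quotients
`(ρ_τ (x - q) - ρ_τ (x - q̄)) / (q - q̄)` are bounded uniformly in `x` and `q`. As `q ↓ q̄`
they equal `1 - τ` for `x ≤ q̄` and eventually `-τ` for `x > q̄`, so dominated convergence
identifies the right derivative of `Φ` with `∫ (𝟙_{x ≤ q̄} - τ) dP = P (-∞, q̄] - τ`.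
-/

open MeasureTheory Filter Topology

noncomputable def rho (τ : ℝ) (x : ℝ) : ℝ := if x ≤ 0 then (τ - 1) * x else τ * x

theorem rho_eq_mul_add_max (τ x : ℝ) : rho τ x = τ * x + max (-x) 0 := by
  rcases le_or_gt x 0 with hx | hx
  · rw [rho, if_pos hx, max_eq_left (by linarith)]
    ring
  · rw [rho, if_neg hx.not_ge, max_eq_right (by linarith)]
    ring

theorem lipschitzWith_rho (τ : ℝ) : LipschitzWith (‖τ‖₊ + 1) (rho τ) := by
  have hrho : rho τ = fun x => τ • x + max (-x) 0 := funext (rho_eq_mul_add_max τ)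
  rw [hrho]
  exact (lipschitzWith_smul τ).add (LipschitzWith.id.neg.max_const 0)

theorem abs_rho_sub_rho_le (τ a b : ℝ) : |rho τ a - rho τ b| ≤ (|τ| + 1) * |a - b| := by
  simpa [Real.dist_eq] using (lipschitzWith_rho τ).dist_le_mul a b

theorem integrable_rho_sub_rho (P : Measure ℝ) [IsFiniteMeasure P] (τ a b : ℝ) :
    Integrable (fun x => rho τ (x - a) - rho τ (x - b)) P := by
  have hmeas : Measurable (rho τ) := (lipschitzWith_rho τ).continuous.measurable
  refine (integrable_const ((|τ| + 1) * |b - a|)).mono'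
    ((hmeas.comp (measurable_id.sub_const a)).sub
      (hmeas.comp (measurable_id.sub_const b))).aestronglyMeasurable
    (ae_of_all _ fun x => ?_)
  simpa using abs_rho_sub_rho_le τ (x - a) (x - b)

theorem abs_rho_slope_le (τ x q₀ q : ℝ) :
    |(rho τ (x - q) - rho τ (x - q₀)) / (q - q₀)| ≤ |τ| + 1 := by
  rcases eq_or_ne q q₀ with rfl | hq
  · simp [add_nonneg]
  rw [abs_div, div_le_iff₀ (abs_pos.mpr (sub_ne_zero.mpr hq))]
  simpa [abs_sub_comm q] using abs_rho_sub_rho_le τ (x - q) (x - q₀)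

theorem rho_slope_of_le {τ x q₀ q : ℝ} (hx : x ≤ q₀) (hq : q₀ < q) :
    (rho τ (x - q) - rho τ (x - q₀)) / (q - q₀) = 1 - τ := by
  rw [rho, rho, if_pos (by linarith), if_pos (by linarith), div_eq_iff (by linarith)]
  ring

theorem rho_slope_of_lt {τ x q₀ q : ℝ} (hq : q < x) (hq₀ : q₀ < q) :
    (rho τ (x - q) - rho τ (x - q₀)) / (q - q₀) = -τ := by
  rw [rho, rho, if_neg (by linarith), if_neg (by linarith), div_eq_iff (by linarith)]
  ring

theorem tendsto_rho_slope (τ x q₀ : ℝ) :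
    Tendsto (fun q => (rho τ (x - q) - rho τ (x - q₀)) / (q - q₀)) (𝓝[>] q₀)
      (𝓝 ((Set.Iic q₀).indicator 1 x - τ)) := by
  rcases le_or_gt x q₀ with hx | hx
  · rw [Set.indicator_of_mem (Set.mem_Iic.mpr hx), Pi.one_apply]
    refine tendsto_const_nhds.congr' ?_
    filter_upwards [self_mem_nhdsWithin] with q hq
    exact (rho_slope_of_le hx hq).symm
  · rw [Set.indicator_of_notMem (Set.notMem_Iic.mpr hx), zero_sub]
    refine tendsto_const_nhds.congr' ?_
    filter_upwards [Ioo_mem_nhdsGT hx] with q hq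
    exact (rho_slope_of_lt hq.2 hq.1).symm

theorem slope_integral_rho_sub_rho (P : Measure ℝ) [IsFiniteMeasure P] (τ q₀ q : ℝ) :
    slope (fun q => ∫ x, (rho τ (x - q) - rho τ x) ∂P) q₀ q
      = ∫ x, (rho τ (x - q) - rho τ (x - q₀)) / (q - q₀) ∂P := by
  have hint : ∀ a, Integrable (fun x => rho τ (x - a) - rho τ x) P := fun a => by
    simpa using integrable_rho_sub_rho P τ a 0
  rw [slope_def_field, integral_div, ← integral_sub (hint q) (hint q₀)]
  congr 2 with x
  ring

theorem stmt16_general (P : Measure ℝ) [IsProbabilityMeasure P] (τ : ℝ)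
    (qbar : ℝ) :
    HasDerivWithinAt (fun q : ℝ => ∫ x, (rho τ (x - q) - rho τ x) ∂P)
      ((P (Set.Iic qbar)).toReal - τ) (Set.Ici qbar) qbar := by
  rw [← hasDerivWithinAt_Ioi_iff_Ici, hasDerivWithinAt_iff_tendsto_slope' Set.self_notMem_Ioi]
  have hlimit :
      ∫ x, ((Set.Iic qbar).indicator 1 x - τ) ∂P = (P (Set.Iic qbar)).toReal - τ := by
    rw [integral_sub (f := (Set.Iic qbar).indicator 1)
        ((integrable_const 1).indicator measurableSet_Iic) (integrable_const τ),
      integral_indicator_one measurableSet_Iic, integral_const, probReal_univ, one_smul]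
    rfl
  rw [funext (slope_integral_rho_sub_rho P τ qbar), ← hlimit]
  refine tendsto_integral_filter_of_dominated_convergence (fun _ => |τ| + 1)
    (Eventually.of_forall fun q => ?_) (Eventually.of_forall fun q => ae_of_all _ fun x => ?_)
    (integrable_const _) (ae_of_all _ fun x => tendsto_rho_slope τ x qbar)
  · exact ((integrable_rho_sub_rho P τ q qbar).div_const _).aestronglyMeasurable
  · exact abs_rho_slope_le τ x qbar q

theorem stmt16 (P : Measure ℝ) [IsProbabilityMeasure P] (τ : ℝ) (hτ : τ ∈ Set.Ioo (0:ℝ) 1)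
    (qbar : ℝ) :
    HasDerivWithinAt (fun q : ℝ => ∫ x, (rho τ (x - q) - rho τ x) ∂P)
      ((P (Set.Iic qbar)).toReal - τ) (Set.Ici qbar) qbar :=
  stmt16_general P τ qbar
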